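/- Let n ≥ 1, let G : ℝⁿ → (n×n real symmetric matrices) be smooth with smooth inverse K = G⁻¹, let V, τ, h : ℝⁿ → ℝ and ξ : ℝⁿ → ℝⁿ be smooth, and suppose £_ξ G = τ·G and £_ξ V = (τ − 2h)·V. Define the gradient vector field W^α(q) = Σ_μ K^{αμ}(q) ∂V/∂q^μ. Then the Lie derivative of W along ξ, (£_ξW)^α = Σ_ρ (ξ^ρ ∂W^α/∂q^ρ − W^ρ ∂ξ^α/∂q^ρ), satisfies (£_ξW)^α = V·Σ_μ K^{αμ} ∂τ/∂q^μ − 2V·Σ_μ K^{αμ} ∂h/∂q^μ − 2h·W^α. -/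

import Mathlib

open scoped BigOperators

/-- Partial derivative `∂f/∂q^α` of a scalar function on `ℝⁿ`. -/
noncomputable def pd {n : ℕ} (f : (Fin n → ℝ) → ℝ) (α : Fin n) (q : Fin n → ℝ) : ℝ :=
  fderiv ℝ f q (Pi.single α 1)

/-- Lie derivative `(£_ξ G)_{μν}`. -/
noncomputable def lieG {n : ℕ} (ξ : (Fin n → ℝ) → Fin n → ℝ)
    (G : (Fin n → ℝ) → Fin n → Fin n → ℝ) (q : Fin n → ℝ) (μ ν : Fin n) : ℝ :=
  ∑ α : Fin n, (ξ q α * pd (fun p => G p μ ν) α q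
      + pd (fun p => ξ p α) μ q * G q α ν
      + pd (fun p => ξ p α) ν q * G q μ α)

/-- Lie derivative `£_ξ V`. -/
noncomputable def lieV {n : ℕ} (ξ : (Fin n → ℝ) → Fin n → ℝ)
    (V : (Fin n → ℝ) → ℝ) (q : Fin n → ℝ) : ℝ :=
  ∑ α : Fin n, ξ q α * pd V α q

/-- Lie derivative of a vector field `W` along `ξ`:
`(£_ξ W)^α = Σ_ρ (ξ^ρ ∂W^α/∂q^ρ − W^ρ ∂ξ^α/∂q^ρ)`. -/
noncomputable def lieW {n : ℕ} (ξ W : (Fin n → ℝ) → Fin n → ℝ)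
    (q : Fin n → ℝ) (α : Fin n) : ℝ :=
  ∑ ρ : Fin n, (ξ q ρ * pd (fun p => W p α) ρ q - W q ρ * pd (fun p => ξ p α) ρ q)

/-- The gradient vector field `W^α = Σ_μ K^{αμ} ∂V/∂q^μ`. -/
noncomputable def gradV {n : ℕ} (K : (Fin n → ℝ) → Fin n → Fin n → ℝ)
    (V : (Fin n → ℝ) → ℝ) (q : Fin n → ℝ) (α : Fin n) : ℝ :=
  ∑ μ : Fin n, K q α μ * pd V μ q

/-!
`lieV ξ f` is the derivative of a scalar `f` along `ξ`, and `W = gradV K V` is the contraction of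
the inverse metric `K` with `dV`, so the Leibniz rule gives `£_ξ W = (£_ξ K)·dV + K·£_ξ(dV)`.
Differentiating `K G = 1` along `ξ` gives `D_ξ K = -K (D_ξ G) K`, and with `£_ξ G = τ G` this
yields `£_ξ K = -τ K`. By the symmetry of second derivatives `£_ξ` commutes with `d`, so
`£_ξ(dV) = d((τ - 2h) V)`, and expanding the product gives the formula.
-/

section
variable {n : ℕ} {f g : (Fin n → ℝ) → ℝ} {q : Fin n → ℝ}

lemma lieV_eq_fderiv (ξ : (Fin n → ℝ) → Fin n → ℝ) : lieV ξ f q = fderiv ℝ f q (ξ q) := by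
  classical
  conv_rhs => rw [pi_eq_sum_univ' (ξ q)]
  simp [lieV, pd]

lemma pd_mul (α : Fin n) (hf : DifferentiableAt ℝ f q) (hg : DifferentiableAt ℝ g q) :
    pd (fun p => f p * g p) α q = pd f α q * g q + f q * pd g α q := by
  simp only [pd, fderiv_fun_mul hf hg, add_apply, smul_apply, smul_eq_mul]
  ring

lemma pd_sub (α : Fin n) (hf : DifferentiableAt ℝ f q) (hg : DifferentiableAt ℝ g q) :
    pd (fun p => f p - g p) α q = pd f α q - pd g α q := by
  simp [pd, fderiv_fun_sub hf hg]

lemma pd_const_mul (c : ℝ) (α : Fin n) (hf : DifferentiableAt ℝ f q) :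
    pd (fun p => c * f p) α q = c * pd f α q := by
  simp [pd, fderiv_const_mul hf]

lemma pd_sum {ι : Type*} (s : Finset ι) {f : ι → (Fin n → ℝ) → ℝ} (α : Fin n)
    (hf : ∀ i ∈ s, DifferentiableAt ℝ (f i) q) :
    pd (fun p => ∑ i ∈ s, f i p) α q = ∑ i ∈ s, pd (f i) α q := by
  simp [pd, fderiv_fun_sum hf]

lemma differentiableAt_pd (hf : ContDiffAt ℝ 2 f q) (α : Fin n) :
    DifferentiableAt ℝ (fun p => pd f α p) q :=
  ((hf.fderiv_right (m := 1) (by norm_num)).differentiableAt one_ne_zero).clm_apply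
    (differentiableAt_const _)

lemma pd_comm (hf : ContDiffAt ℝ 2 f q) (μ ρ : Fin n) :
    pd (fun p => pd f μ p) ρ q = pd (fun p => pd f ρ p) μ q := by
  have hdf := (hf.fderiv_right (m := 1) (by norm_num)).differentiableAt one_ne_zero
  simp only [pd, fderiv_clm_apply hdf (differentiableAt_const _)]
  simpa using hf.isSymmSndFDerivAt (by simp) (Pi.single ρ 1) (Pi.single μ 1)

variable (ξ : (Fin n → ℝ) → Fin n → ℝ)

lemma lieV_mul (hf : DifferentiableAt ℝ f q) (hg : DifferentiableAt ℝ g q) :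
    lieV ξ (fun p => f p * g p) q = lieV ξ f q * g q + f q * lieV ξ g q := by
  simp only [lieV_eq_fderiv, fderiv_fun_mul hf hg, add_apply, smul_apply, smul_eq_mul]
  ring

lemma lieV_sum {ι : Type*} (s : Finset ι) {f : ι → (Fin n → ℝ) → ℝ}
    (hf : ∀ i ∈ s, DifferentiableAt ℝ (f i) q) :
    lieV ξ (fun p => ∑ i ∈ s, f i p) q = ∑ i ∈ s, lieV ξ (f i) q := by
  simp [lieV_eq_fderiv, fderiv_fun_sum hf]

lemma lieV_const (c : ℝ) : lieV ξ (fun _ => c) q = 0 := by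
  simp [lieV_eq_fderiv]

noncomputable def lieK (K : (Fin n → ℝ) → Fin n → Fin n → ℝ) (q : Fin n → ℝ) (α β : Fin n) : ℝ :=
  lieV ξ (fun p => K p α β) q - ∑ ρ : Fin n, K q ρ β * pd (fun p => ξ p α) ρ q
    - ∑ ρ : Fin n, K q α ρ * pd (fun p => ξ p β) ρ q

noncomputable def lieOneForm (ω : (Fin n → ℝ) → Fin n → ℝ) (q : Fin n → ℝ) (μ : Fin n) : ℝ :=
  lieV ξ (fun p => ω p μ) q + ∑ ρ : Fin n, ω q ρ * pd (fun p => ξ p ρ) μ q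

lemma lieW_eq (W : (Fin n → ℝ) → Fin n → ℝ) (α : Fin n) :
    lieW ξ W q α = lieV ξ (fun p => W p α) q - ∑ ρ : Fin n, W q ρ * pd (fun p => ξ p α) ρ q := by
  simp [lieW, lieV, Finset.sum_sub_distrib]

lemma lieW_contract {K : (Fin n → ℝ) → Fin n → Fin n → ℝ} {ω : (Fin n → ℝ) → Fin n → ℝ}
    (hK : ∀ α β, DifferentiableAt ℝ (fun p => K p α β) q)
    (hω : ∀ μ, DifferentiableAt ℝ (fun p => ω p μ) q) (α : Fin n) :
    lieW ξ (fun p α => ∑ μ : Fin n, K p α μ * ω p μ) q α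
      = ∑ μ : Fin n, lieK ξ K q α μ * ω q μ + ∑ μ : Fin n, K q α μ * lieOneForm ξ ω q μ := by
  have hW : ∑ ρ : Fin n, (∑ μ : Fin n, K q ρ μ * ω q μ) * pd (fun p => ξ p α) ρ q
      = ∑ μ : Fin n, (∑ ρ : Fin n, K q ρ μ * pd (fun p => ξ p α) ρ q) * ω q μ := by
    simp only [Finset.sum_mul]
    rw [Finset.sum_comm]
    exact Finset.sum_congr rfl fun _ _ => Finset.sum_congr rfl fun _ _ => by ring
  have hcancel : ∑ μ : Fin n, (∑ ρ : Fin n, K q α ρ * pd (fun p => ξ p μ) ρ q) * ω q μ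
      = ∑ μ : Fin n, K q α μ * ∑ ρ : Fin n, ω q ρ * pd (fun p => ξ p ρ) μ q := by
    simp only [Finset.sum_mul, Finset.mul_sum]
    rw [Finset.sum_comm]
    exact Finset.sum_congr rfl fun _ _ => Finset.sum_congr rfl fun _ _ => by ring
  rw [lieW_eq, lieV_sum ξ _ fun μ _ => (hK α μ).fun_mul (hω μ), hW]
  simp only [lieV_mul ξ (hK _ _) (hω _), lieK, lieOneForm, sub_mul, mul_add,
    Finset.sum_sub_distrib, Finset.sum_add_distrib]
  linear_combination hcancel

lemma lieOneForm_pd_eq_pd_lieV {V : (Fin n → ℝ) → ℝ} (hV : ContDiffAt ℝ 2 V q)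
    (hξ : ∀ ρ, DifferentiableAt ℝ (fun p => ξ p ρ) q) (μ : Fin n) :
    lieOneForm ξ (fun p μ => pd V μ p) q μ = pd (lieV ξ V) μ q := by
  have hVξ : ∀ ρ, ξ q ρ * pd (fun p => pd V μ p) ρ q = ξ q ρ * pd (fun p => pd V ρ p) μ q :=
    fun ρ => by rw [pd_comm hV]
  rw [show lieV ξ V = fun p => ∑ ρ : Fin n, ξ p ρ * pd V ρ p from rfl,
    pd_sum _ _ fun ρ _ => (hξ ρ).fun_mul (differentiableAt_pd hV ρ)]
  simp only [lieOneForm, lieV, hVξ, pd_mul μ (hξ _) (differentiableAt_pd hV _),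
    Finset.sum_add_distrib]
  simp only [mul_comm]
  ring

variable {G K : (Fin n → ℝ) → Fin n → Fin n → ℝ}

open scoped Matrix

lemma lieV_of_mul_eq_one (hG : ∀ a b, DifferentiableAt ℝ (fun p => G p a b) q)
    (hK : ∀ a b, DifferentiableAt ℝ (fun p => K p a b) q)
    (hinv : ∀ p, Matrix.of (K p) * Matrix.of (G p) = 1) :
    Matrix.of (fun a b => lieV ξ (fun p => K p a b) q)
      = -(Matrix.of (K q) * Matrix.of (fun a b => lieV ξ (fun p => G p a b) q)
          * Matrix.of (K q)) := by
  set DK := Matrix.of (fun a b => lieV ξ (fun p => K p a b) q)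
  set DG := Matrix.of (fun a b => lieV ξ (fun p => G p a b) q)
  have hGK : Matrix.of (G q) * Matrix.of (K q) = 1 := mul_eq_one_comm.mp (hinv q)
  have hD : DK * Matrix.of (G q) + Matrix.of (K q) * DG = 0 := by
    ext a b
    have hconst : lieV ξ (fun p => (Matrix.of (K p) * Matrix.of (G p)) a b) q = 0 := by
      simp only [hinv, lieV_const]
    simpa [Matrix.mul_apply, lieV_sum ξ _ fun c _ => (hK a c).fun_mul (hG c b),
      lieV_mul ξ (hK _ _) (hG _ _), Finset.sum_add_distrib, DK, DG] using hconst
  calc DK = DK * Matrix.of (G q) * Matrix.of (K q) := by rw [Matrix.mul_assoc, hGK, Matrix.mul_one]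
    _ = _ := by rw [eq_neg_of_add_eq_zero_left hD]; simp

lemma lieK_eq_neg_mul_of_lieG_eq_mul (hG : ∀ a b, DifferentiableAt ℝ (fun p => G p a b) q)
    (hK : ∀ a b, DifferentiableAt ℝ (fun p => K p a b) q)
    (hinv : ∀ p, Matrix.of (K p) * Matrix.of (G p) = 1) {c : ℝ}
    (hlieG : ∀ μ ν, lieG ξ G q μ ν = c * G q μ ν) (α β : Fin n) :
    lieK ξ K q α β = -(c * K q α β) := by
  set J := Matrix.of fun a b => pd (fun p => ξ p a) b q
  have hDG : Matrix.of (fun a b => lieV ξ (fun p => G p a b) q)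
      = c • Matrix.of (G q) - Jᵀ * Matrix.of (G q) - Matrix.of (G q) * J := by
    ext μ ν
    have h := hlieG μ ν
    simp only [lieG, Finset.sum_add_distrib] at h
    simp only [lieV, Matrix.of_apply, Matrix.smul_of, Matrix.sub_apply, Pi.smul_apply, smul_eq_mul,
      ← h, mul_comm, Matrix.mul_apply, Matrix.transpose_apply, J]
    ring
  have hKG := hinv q
  have hGK : Matrix.of (G q) * Matrix.of (K q) = 1 := mul_eq_one_comm.mp hKG
  have hDK : Matrix.of (fun a b => lieV ξ (fun p => K p a b) q)
      = -(c • Matrix.of (K q)) + J * Matrix.of (K q) + Matrix.of (K q) * Jᵀ := by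
    rw [lieV_of_mul_eq_one ξ hG hK hinv, hDG]
    simp only [Matrix.mul_sub, Matrix.sub_mul, Matrix.mul_smul, Matrix.smul_mul, ← Matrix.mul_assoc,
      hKG, Matrix.mul_assoc _ (Matrix.of (G q)), hGK, Matrix.one_mul, Matrix.mul_one]
    abel
  have h := congrFun₂ hDK α β
  simp only [Matrix.of_apply, Matrix.add_apply, Matrix.neg_apply, Matrix.smul_apply,
    Matrix.mul_apply, Matrix.transpose_apply, J] at h
  simp only [lieK, h, smul_eq_mul, mul_comm (pd (fun p => ξ p α) _ q)]
  ring

end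

theorem lie_derivative_of_gradient_field_general (n : ℕ)
    (G K : (Fin n → ℝ) → Fin n → Fin n → ℝ)
    (hGsmooth : ∀ μ ν, ContDiff ℝ (⊤ : ℕ∞) fun q => G q μ ν)
    (hKsmooth : ∀ μ ν, ContDiff ℝ (⊤ : ℕ∞) fun q => K q μ ν)
    (hinv : ∀ q μ ν, (∑ ρ : Fin n, K q μ ρ * G q ρ ν) = if μ = ν then (1 : ℝ) else 0)
    (V τ h : (Fin n → ℝ) → ℝ) (ξ : (Fin n → ℝ) → Fin n → ℝ)
    (hVsmooth : ContDiff ℝ (⊤ : ℕ∞) V)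
    (hτsmooth : ContDiff ℝ (⊤ : ℕ∞) τ)
    (hhsmooth : ContDiff ℝ (⊤ : ℕ∞) h)
    (hξsmooth : ContDiff ℝ (⊤ : ℕ∞) ξ)
    (hlieG : ∀ q μ ν, lieG ξ G q μ ν = τ q * G q μ ν)
    (hlieV : ∀ q, lieV ξ V q = (τ q - 2 * h q) * V q) :
    ∀ q α, lieW ξ (gradV K V) q α
      = V q * (∑ μ : Fin n, K q α μ * pd τ μ q)
        - 2 * V q * (∑ μ : Fin n, K q α μ * pd h μ q)
        - 2 * h q * gradV K V q α := by
  intro q α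
  have hGd : ∀ a b, DifferentiableAt ℝ (fun p => G p a b) q :=
    fun a b => (hGsmooth a b).differentiable (by simp) q
  have hKd : ∀ a b, DifferentiableAt ℝ (fun p => K p a b) q :=
    fun a b => (hKsmooth a b).differentiable (by simp) q
  have hξd : ∀ ρ, DifferentiableAt ℝ (fun p => ξ p ρ) q :=
    fun ρ => (contDiff_pi.mp hξsmooth ρ).differentiable (by simp) q
  have hτd : DifferentiableAt ℝ τ q := hτsmooth.differentiable (by simp) q
  have hhd : DifferentiableAt ℝ h q := hhsmooth.differentiable (by simp) q
  have h2hd : DifferentiableAt ℝ (fun p => 2 * h p) q := hhd.const_mul 2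
  have hV : ContDiffAt ℝ 2 V q := hVsmooth.contDiffAt.of_le (WithTop.coe_le_coe.mpr le_top)
  have hKG : ∀ p, Matrix.of (K p) * Matrix.of (G p) = 1 := fun p => by
    ext μ ν
    simp [Matrix.mul_apply, hinv, Matrix.one_apply]
  have hdlieV : ∀ μ, pd (lieV ξ V) μ q
      = (pd τ μ q - 2 * pd h μ q) * V q + (τ q - 2 * h q) * pd V μ q := fun μ => by
    rw [funext hlieV, pd_mul μ (hτd.fun_sub h2hd) (hV.differentiableAt two_ne_zero),
      pd_sub μ hτd h2hd, pd_const_mul 2 μ hhd]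
  unfold gradV
  rw [lieW_contract ξ hKd fun μ => differentiableAt_pd hV μ]
  simp only [lieK_eq_neg_mul_of_lieG_eq_mul ξ hGd hKd hKG (hlieG q),
    lieOneForm_pd_eq_pd_lieV ξ hV hξd, hdlieV, Finset.mul_sum, ← Finset.sum_add_distrib,
    ← Finset.sum_sub_distrib]
  exact Finset.sum_congr rfl fun μ _ => by ring

/-- if `£_ξ G = τ·G` and `£_ξ V = (τ−2h)·V` then the gradient field
`W^α = K^{αμ} V_{,μ}` satisfies `(£_ξ W)^α = V K^{αμ}τ_{,μ} − 2V K^{αμ}h_{,μ} − 2h W^α`. -/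
theorem lie_derivative_of_gradient_field (n : ℕ) (hn : 1 ≤ n)
    (G K : (Fin n → ℝ) → Fin n → Fin n → ℝ)
    (hGsmooth : ∀ μ ν, ContDiff ℝ (⊤ : ℕ∞) fun q => G q μ ν)
    (hKsmooth : ∀ μ ν, ContDiff ℝ (⊤ : ℕ∞) fun q => K q μ ν)
    (hGsymm : ∀ q μ ν, G q μ ν = G q ν μ)
    (hKsymm : ∀ q μ ν, K q μ ν = K q ν μ)
    (hinv : ∀ q μ ν, (∑ ρ : Fin n, K q μ ρ * G q ρ ν) = if μ = ν then (1 : ℝ) else 0)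
    (V τ h : (Fin n → ℝ) → ℝ) (ξ : (Fin n → ℝ) → Fin n → ℝ)
    (hVsmooth : ContDiff ℝ (⊤ : ℕ∞) V)
    (hτsmooth : ContDiff ℝ (⊤ : ℕ∞) τ)
    (hhsmooth : ContDiff ℝ (⊤ : ℕ∞) h)
    (hξsmooth : ContDiff ℝ (⊤ : ℕ∞) ξ)
    (hlieG : ∀ q μ ν, lieG ξ G q μ ν = τ q * G q μ ν)
    (hlieV : ∀ q, lieV ξ V q = (τ q - 2 * h q) * V q) :
    ∀ q α, lieW ξ (gradV K V) q α
      = V q * (∑ μ : Fin n, K q α μ * pd τ μ q)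
        - 2 * V q * (∑ μ : Fin n, K q α μ * pd h μ q)
        - 2 * h q * gradV K V q α :=
  lie_derivative_of_gradient_field_general n G K hGsmooth hKsmooth hinv V τ h ξ hVsmooth hτsmooth
    hhsmooth hξsmooth hlieG hlieV
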